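/- Let I ⊆ k[x_1,…,x_n] be an ideal, > a monomial order, G_>(I) the reduced Gröbner basis of I with respect to >, and M ∈ ℚ^{r×n} (with ℚ^r carrying the lexicographic order ≻). Then in_>(in_M(I)) = in_>(I) if and only if in_>(in_M(g)) = in_>(g) for every g ∈ G_>(I). -/

import Mathlib

open MvPolynomial

instance finWellFoundedLT {r : ℕ} : WellFoundedLT (Fin r) := Finite.to_wellFoundedLT

/-- The initial form of a polynomial with respect to a comparison `le` on exponent vectors:
the sum of the terms of `f` whose exponent is `le`-minimal in the support of `f`.
For a total order this is the single `le`-smallest term of `f`. -/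
noncomputable def initialForm {k : Type} [Field k] {n : ℕ}
    (le : (Fin n →₀ ℕ) → (Fin n →₀ ℕ) → Prop)
    (f : MvPolynomial (Fin n) k) : MvPolynomial (Fin n) k :=
  letI := Classical.decPred fun α : Fin n →₀ ℕ => ∀ β ∈ f.support, le α β
  ∑ α ∈ f.support.filter (fun α => ∀ β ∈ f.support, le α β),
    monomial α (MvPolynomial.coeff α f)

/-- The initial ideal of `I`: the ideal generated by initial forms of nonzero elements of `I`. -/
noncomputable def initialIdeal {k : Type} [Field k] {n : ℕ}
    (le : (Fin n →₀ ℕ) → (Fin n →₀ ℕ) → Prop)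
    (I : Ideal (MvPolynomial (Fin n) k)) : Ideal (MvPolynomial (Fin n) k) :=
  Ideal.span {g | ∃ f ∈ I, f ≠ 0 ∧ g = initialForm le f}

/-- The weight `Mα ∈ ℚ^r` of an exponent vector `α` under the weighting matrix `M`. -/
def mwt {n r : ℕ} (M : Matrix (Fin r) (Fin n) ℚ) (α : Fin n →₀ ℕ) : Fin r → ℚ :=
  fun i => ∑ j, M i j * (α j : ℚ)

/-- Comparison of exponents by `M`-weight, in the lexicographic order on `ℚ^r`. -/
def mLe {n r : ℕ} (M : Matrix (Fin r) (Fin n) ℚ) : (Fin n →₀ ℕ) → (Fin n →₀ ℕ) → Prop :=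
  fun α β => toLex (mwt M α) ≤ toLex (mwt M β)

/-- A monomial order on `k[x₁,…,xₙ]` in the MIN convention: a total order on exponent
vectors compatible with addition in which `0` (the monomial `1`) is the greatest element. -/
structure MinMonomialOrder (n : ℕ) where
  le : (Fin n →₀ ℕ) → (Fin n →₀ ℕ) → Prop
  total : ∀ a b, le a b ∨ le b a
  antisymm : ∀ a b, le a b → le b a → a = b
  trans : ∀ a b c, le a b → le b c → le a c
  add_le_add : ∀ a b c, le a b → le (a + c) (b + c)
  le_zero : ∀ a, le a 0

/-- `α` is the exponent of the initial (i.e. `le`-smallest) term of `f`. -/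
def IsLeadExp {k : Type} [Field k] {n : ℕ} (mo : MinMonomialOrder n)
    (f : MvPolynomial (Fin n) k) (α : Fin n →₀ ℕ) : Prop :=
  α ∈ f.support ∧ ∀ β ∈ f.support, mo.le α β

/-- `G` is the reduced Gröbner basis of `I` with respect to the monomial order `mo`:
`G ⊆ I`, the initial terms of `G` generate the initial ideal of `I`, every `g ∈ G` is monic,
no initial term of one element divides the initial term of another, and no non-initial term
of any `g ∈ G` is divisible by the initial term of any `g' ∈ G`.  (Divisibility of monomials
is the componentwise order `≤` on exponents.) -/
def IsReducedGB {k : Type} [Field k] {n : ℕ} (mo : MinMonomialOrder n)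
    (I : Ideal (MvPolynomial (Fin n) k)) (G : Finset (MvPolynomial (Fin n) k)) : Prop :=
  (↑G : Set (MvPolynomial (Fin n) k)) ⊆ ↑I ∧ (0 : MvPolynomial (Fin n) k) ∉ G ∧
  initialIdeal mo.le I = Ideal.span ((fun g => initialForm mo.le g) '' ↑G) ∧
  (∀ g ∈ G, ∀ α, IsLeadExp mo g α → MvPolynomial.coeff α g = 1) ∧
  (∀ g ∈ G, ∀ g' ∈ G, g ≠ g' → ∀ α α', IsLeadExp mo g α → IsLeadExp mo g' α' → ¬ α' ≤ α) ∧
  (∀ g ∈ G, ∀ g' ∈ G, ∀ β ∈ g.support, ¬ IsLeadExp mo g β →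
    ∀ α', IsLeadExp mo g' α' → ¬ α' ≤ β)

/-!
(⇒) The `>`-initial term of `in_M(g)` is a term of `g` whose monomial lies in `in_>(I)`; in a
reduced Gröbner basis the only such term of `g` is its initial term.

(⇐) The hypothesis says that every `g ∈ G` has its initial term among its terms of least weight.
Cancelling the initial term of `f ∈ I` by a monomial multiple of such a `g` therefore adds only
terms of weight at least that of `in_>(f)`, so it leaves `in_M(f)` unchanged as long as
`in_>(f)` is not of least weight in `f`. By Dickson's lemma this reduction terminates, and then
`in_>(in_M(f)) = in_>(f) ∈ in_>(I)`. Finally `in_M(I)` is spanned by weighted homogeneous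
polynomials, and each homogeneous component of one of its elements is the component of the same
weight of some `f ∈ I` having no terms of smaller weight, hence equals `in_M(f)` whenever it is
nonzero; so `in_>(in_M(I))` is generated by the `in_>(in_M(f))`.
-/

open Finsupp (weight)

theorem Finset.exists_rel_forall_of_total {α : Type*} {rel : α → α → Prop}
    (total : ∀ a b, rel a b ∨ rel b a) (trans : ∀ a b c, rel a b → rel b c → rel a c)
    {s : Finset α} (hs : s.Nonempty) : ∃ a ∈ s, ∀ b ∈ s, rel a b := by
  induction hs using Finset.Nonempty.cons_induction with
  | singleton a =>
    refine ⟨a, Finset.mem_singleton_self a, fun b hb => ?_⟩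
    rw [Finset.mem_singleton.mp hb]
    exact (total a a).elim id id
  | cons a s ha _ ih =>
    obtain ⟨m, hm, hmin⟩ := ih
    rcases total m a with hma | ham
    · exact ⟨m, Finset.mem_cons_of_mem hm, (Finset.forall_mem_cons ha _).mpr ⟨hma, hmin⟩⟩
    · exact ⟨a, Finset.mem_cons_self a s, (Finset.forall_mem_cons ha _).mpr
        ⟨(total a a).elim id id, fun b hb => trans _ _ _ ham (hmin b hb)⟩⟩

theorem MvPolynomial.exists_add_eq_of_mem_support_monomial_mul {σ R : Type*} [CommSemiring R]
    {m β : σ →₀ ℕ} {c : R} {f : MvPolynomial σ R} (h : β ∈ (monomial m c * f).support) :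
    ∃ δ ∈ f.support, m + δ = β := by
  rw [mem_support_iff, coeff_monomial_mul'] at h
  split_ifs at h with hm
  · exact ⟨β - m, mem_support_iff.mpr (right_ne_zero_of_mul h), add_tsub_cancel_of_le hm⟩
  · exact absurd rfl h

theorem MvPolynomial.weightedHomogeneousComponent_monomial_mul {σ R Γ : Type*} [CommSemiring R]
    [AddCommGroup Γ] (ω : σ → Γ) (v : Γ) (m : σ →₀ ℕ) (c : R) (f : MvPolynomial σ R) :
    weightedHomogeneousComponent ω v (monomial m c * f) =
      monomial m c * weightedHomogeneousComponent ω (v - weight ω m) f := by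
  classical
  ext β
  simp only [coeff_monomial_mul', coeff_weightedHomogeneousComponent]
  by_cases hm : m ≤ β
  · have hβ : weight ω β = weight ω m + weight ω (β - m) := by
      rw [← map_add, add_tsub_cancel_of_le hm]
    simp only [hm, if_true, hβ, eq_sub_iff_add_eq', mul_ite, mul_zero]
  · simp [hm]

section InitialForm

variable {k : Type} [Field k] {n : ℕ} {le : (Fin n →₀ ℕ) → (Fin n →₀ ℕ) → Prop}

open scoped Classical in
theorem coeff_initialForm (f : MvPolynomial (Fin n) k) (β : Fin n →₀ ℕ) :
    coeff β (initialForm le f) = if ∀ γ ∈ f.support, le β γ then coeff β f else 0 := by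
  simp only [initialForm, coeff_sum, coeff_monomial, Finset.sum_ite_eq', Finset.mem_filter]
  by_cases hβ : β ∈ f.support
  · simp [hβ]
  · simp [hβ, notMem_support_iff.mp hβ]

theorem mem_support_initialForm {f : MvPolynomial (Fin n) k} {β : Fin n →₀ ℕ} :
    β ∈ (initialForm le f).support ↔ β ∈ f.support ∧ ∀ γ ∈ f.support, le β γ := by
  rw [mem_support_iff, coeff_initialForm, mem_support_iff]
  split_ifs with h
  · exact ⟨fun hc => ⟨hc, h⟩, And.left⟩
  · exact ⟨fun hc => absurd rfl hc, fun hc => absurd hc.2 h⟩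

theorem support_initialForm_subset (f : MvPolynomial (Fin n) k) :
    (initialForm le f).support ⊆ f.support :=
  fun _ hβ => (mem_support_initialForm.mp hβ).1

theorem coeff_initialForm_of_mem_support {f : MvPolynomial (Fin n) k} {β : Fin n →₀ ℕ}
    (hβ : β ∈ (initialForm le f).support) : coeff β (initialForm le f) = coeff β f := by
  rw [coeff_initialForm, if_pos (mem_support_initialForm.mp hβ).2]

theorem initialForm_mem_initialIdeal {I : Ideal (MvPolynomial (Fin n) k)}
    {f : MvPolynomial (Fin n) k} (hf : f ∈ I) (hf0 : f ≠ 0) :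
    initialForm le f ∈ initialIdeal le I :=
  Ideal.subset_span ⟨f, hf, hf0, rfl⟩

theorem initialForm_initialForm_mem_initialIdeal_initialIdeal
    {le' : (Fin n →₀ ℕ) → (Fin n →₀ ℕ) → Prop} {I : Ideal (MvPolynomial (Fin n) k)}
    {f : MvPolynomial (Fin n) k} (hf : f ∈ I) (hf0 : f ≠ 0) (hne : initialForm le f ≠ 0) :
    initialForm le' (initialForm le f) ∈ initialIdeal le' (initialIdeal le I) :=
  initialForm_mem_initialIdeal (initialForm_mem_initialIdeal hf hf0) hne

end InitialForm

namespace MinMonomialOrder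

variable {n : ℕ} (mo : MinMonomialOrder n)

theorem refl (a : Fin n →₀ ℕ) : mo.le a a := (mo.total a a).elim id id

theorem le_of_ge {a b : Fin n →₀ ℕ} (h : a ≤ b) : mo.le b a := by
  simpa [tsub_add_cancel_of_le h] using mo.add_le_add _ _ a (mo.le_zero (b - a))

theorem add_le_add_left {a b : Fin n →₀ ℕ} (h : mo.le a b) (m : Fin n →₀ ℕ) :
    mo.le (m + a) (m + b) := by
  simpa [add_comm m] using mo.add_le_add a b m h

theorem wellFounded : WellFounded (fun a b : Fin n →₀ ℕ => mo.le b a ∧ a ≠ b) := by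
  have : IsPreorder (Fin n →₀ ℕ) (fun a b => mo.le b a) :=
    { refl := mo.refl
      trans := fun a b c hab hbc => mo.trans _ _ _ hbc hab }
  have hwqo : WellQuasiOrdered (fun a b : Fin n →₀ ℕ => mo.le b a) := fun f =>
    (wellQuasiOrdered_le f).imp fun _ ⟨m, hlt, hle⟩ => ⟨m, hlt, mo.le_of_ge hle⟩
  exact Subrelation.wf (fun ⟨hba, hne⟩ => ⟨hba, fun hab => hne (mo.antisymm _ _ hab hba)⟩)
    hwqo.wellFounded

end MinMonomialOrder

section LeadExp

variable {k : Type} [Field k] {n : ℕ} {mo : MinMonomialOrder n}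

theorem mem_support_initialForm_iff_isLeadExp {f : MvPolynomial (Fin n) k} {α : Fin n →₀ ℕ} :
    α ∈ (initialForm mo.le f).support ↔ IsLeadExp mo f α :=
  mem_support_initialForm

theorem IsLeadExp.ne_zero {f : MvPolynomial (Fin n) k} {α : Fin n →₀ ℕ}
    (hα : IsLeadExp mo f α) : f ≠ 0 :=
  support_nonempty.mp ⟨α, hα.1⟩

theorem IsLeadExp.unique {f : MvPolynomial (Fin n) k} {α β : Fin n →₀ ℕ}
    (hα : IsLeadExp mo f α) (hβ : IsLeadExp mo f β) : α = β :=
  mo.antisymm _ _ (hα.2 β hβ.1) (hβ.2 α hα.1)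

theorem exists_isLeadExp (mo : MinMonomialOrder n) {f : MvPolynomial (Fin n) k} (hf : f ≠ 0) :
    ∃ α, IsLeadExp mo f α := by
  obtain ⟨α, hα, hmin⟩ :=
    Finset.exists_rel_forall_of_total mo.total mo.trans (support_nonempty.mpr hf)
  exact ⟨α, hα, hmin⟩

theorem initialForm_eq_monomial {f : MvPolynomial (Fin n) k} {α : Fin n →₀ ℕ}
    (hα : IsLeadExp mo f α) : initialForm mo.le f = monomial α (coeff α f) := by
  ext β
  rw [coeff_monomial]
  split_ifs with h
  · subst h
    exact coeff_initialForm_of_mem_support (mem_support_initialForm_iff_isLeadExp.mpr hα)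
  · exact notMem_support_iff.mp fun hβ =>
      h (hα.unique (mem_support_initialForm_iff_isLeadExp.mp hβ))

theorem IsLeadExp.monomial_mul {f : MvPolynomial (Fin n) k} {α : Fin n →₀ ℕ}
    (hα : IsLeadExp mo f α) (m : Fin n →₀ ℕ) {c : k} (hc : c ≠ 0) :
    IsLeadExp mo (monomial m c * f) (m + α) := by
  refine ⟨?_, fun β hβ => ?_⟩
  · rw [mem_support_iff, coeff_monomial_mul]
    exact mul_ne_zero hc (mem_support_iff.mp hα.1)
  · obtain ⟨δ, hδ, rfl⟩ := exists_add_eq_of_mem_support_monomial_mul hβ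
    exact mo.add_le_add_left (hα.2 δ hδ) m

theorem IsLeadExp.lt_of_sub {f q : MvPolynomial (Fin n) k} {α α' : Fin n →₀ ℕ}
    (hf : IsLeadExp mo f α) (hq : IsLeadExp mo q α) (hcoeff : coeff α f = coeff α q)
    (h : IsLeadExp mo (f - q) α') : mo.le α α' ∧ α' ≠ α := by
  refine ⟨?_, ?_⟩
  · rcases Finset.mem_union.mp (support_sub _ f q h.1) with hα' | hα'
    · exact hf.2 α' hα'
    · exact hq.2 α' hα'
  · rintro rfl
    exact mem_support_iff.mp h.1 (by rw [coeff_sub, hcoeff, sub_self])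

theorem IsLeadExp.le_of_initialForm_initialForm_eq
    {le : (Fin n →₀ ℕ) → (Fin n →₀ ℕ) → Prop} {g : MvPolynomial (Fin n) k} {γ : Fin n →₀ ℕ}
    (hγ : IsLeadExp mo g γ) (h : initialForm mo.le (initialForm le g) = initialForm mo.le g) :
    ∀ δ ∈ g.support, le γ δ := by
  have hγ' : γ ∈ (initialForm mo.le (initialForm le g)).support :=
    h ▸ mem_support_initialForm_iff_isLeadExp.mpr hγ
  exact (mem_support_initialForm.mp (support_initialForm_subset _ hγ')).2

end LeadExp

section Weight

variable {k : Type} [Field k] {n : ℕ} {Γ : Type*} [AddCommMonoid Γ] [LinearOrder Γ]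
  {ω : Fin n → Γ}

def weightLe (ω : Fin n → Γ) (α β : Fin n →₀ ℕ) : Prop :=
  weight ω α ≤ weight ω β

theorem mLe_eq_weightLe {r : ℕ} (M : Matrix (Fin r) (Fin n) ℚ) :
    mLe M = weightLe (fun j => toLex fun i => M i j) := by
  have hwt (α : Fin n →₀ ℕ) :
      toLex (mwt M α) = weight (fun j => toLex fun i => M i j) α := by
    apply ofLex.injective
    funext i
    rw [Finsupp.weight_apply, Finsupp.sum_fintype _ _ (by simp), ← coe_ofLexAddEquiv, map_sum]
    simp [mwt, mul_comm]
  funext α β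
  simp only [mLe, weightLe, hwt]

theorem initialForm_weightLe_eq_weightedHomogeneousComponent {f : MvPolynomial (Fin n) k}
    {v : Γ} (hlb : ∀ γ ∈ f.support, v ≤ weight ω γ)
    (hne : weightedHomogeneousComponent ω v f ≠ 0) :
    initialForm (weightLe ω) f = weightedHomogeneousComponent ω v f := by
  classical
  obtain ⟨β₀, hβ₀⟩ := support_nonempty.mpr hne
  rw [support_weightedHomogeneousComponent, Finset.mem_filter] at hβ₀
  ext β
  rw [coeff_initialForm, coeff_weightedHomogeneousComponent]
  by_cases hβ : β ∈ f.support
  · refine if_congr ⟨fun h => ?_, fun h γ hγ => by rw [weightLe, h]; exact hlb γ hγ⟩ rfl rfl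
    exact le_antisymm (hβ₀.2 ▸ h β₀ hβ₀.1) (hlb β hβ)
  · simp [notMem_support_iff.mp hβ]

theorem exists_initialForm_weightLe_eq_weightedHomogeneousComponent
    {f : MvPolynomial (Fin n) k} (hf : f ≠ 0) :
    ∃ v, (∀ γ ∈ f.support, v ≤ weight ω γ) ∧
      weightedHomogeneousComponent ω v f ≠ 0 ∧
      initialForm (weightLe ω) f = weightedHomogeneousComponent ω v f := by
  obtain ⟨α, hα, hmin⟩ := Finset.exists_min_image f.support (weight ω)
    (support_nonempty.mpr hf)
  have hne : weightedHomogeneousComponent ω (weight ω α) f ≠ 0 := by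
    rw [← support_nonempty, support_weightedHomogeneousComponent]
    exact ⟨α, Finset.mem_filter.mpr ⟨hα, rfl⟩⟩
  exact ⟨_, hmin, hne, initialForm_weightLe_eq_weightedHomogeneousComponent hmin hne⟩

theorem initialForm_weightLe_ne_zero {f : MvPolynomial (Fin n) k} (hf : f ≠ 0) :
    initialForm (weightLe ω) f ≠ 0 := by
  obtain ⟨v, -, hne, heq⟩ := exists_initialForm_weightLe_eq_weightedHomogeneousComponent
    (ω := ω) hf
  exact heq ▸ hne

theorem initialForm_weightLe_sub_of_lt {f q : MvPolynomial (Fin n) k} {δ : Fin n →₀ ℕ}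
    (hδ : δ ∈ f.support) (hq : ∀ γ ∈ q.support, weight ω δ < weight ω γ) :
    initialForm (weightLe ω) (f - q) = initialForm (weightLe ω) f := by
  obtain ⟨v, hlb, hne, heq⟩ := exists_initialForm_weightLe_eq_weightedHomogeneousComponent
    (ω := ω) (support_nonempty.mp ⟨δ, hδ⟩)
  have hvq : weightedHomogeneousComponent ω v q = 0 :=
    weightedHomogeneousComponent_eq_zero' v q fun γ hγ => ((hlb δ hδ).trans_lt (hq γ hγ)).ne'
  have hlb' : ∀ γ ∈ (f - q).support, v ≤ weight ω γ := fun γ hγ => by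
    rcases Finset.mem_union.mp (support_sub _ f q hγ) with hγ | hγ
    · exact hlb γ hγ
    · exact (hlb δ hδ).trans (hq γ hγ).le
  rw [heq, initialForm_weightLe_eq_weightedHomogeneousComponent hlb' (by simpa [hvq] using hne),
    map_sub, hvq, sub_zero]

end Weight

section WeightInitialIdeal

variable {k : Type} [Field k] {n : ℕ} {Γ : Type*} [AddCommGroup Γ] [LinearOrder Γ]
  [IsOrderedAddMonoid Γ] {ω : Fin n → Γ} {I : Ideal (MvPolynomial (Fin n) k)}

theorem exists_weightedHomogeneousComponent_eq_of_mem_initialIdeal {h : MvPolynomial (Fin n) k}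
    (hh : h ∈ initialIdeal (weightLe ω) I) (v : Γ) :
    ∃ f ∈ I, (∀ γ ∈ f.support, v ≤ weight ω γ) ∧
      weightedHomogeneousComponent ω v h = weightedHomogeneousComponent ω v f := by
  let P (x : MvPolynomial (Fin n) k) : Prop := ∀ v, ∃ f ∈ I,
    (∀ γ ∈ f.support, v ≤ weight ω γ) ∧
      weightedHomogeneousComponent ω v x = weightedHomogeneousComponent ω v f
  have zero : P 0 := fun v => ⟨0, I.zero_mem, by simp, by simp⟩
  have add (x y) (hx : P x) (hy : P y) : P (x + y) := fun v => by
    obtain ⟨f, hf, hlb, he⟩ := hx v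
    obtain ⟨f', hf', hlb', he'⟩ := hy v
    refine ⟨f + f', I.add_mem hf hf', fun γ hγ => ?_, by rw [map_add, map_add, he, he']⟩
    rcases Finset.mem_union.mp (support_add hγ) with hγ | hγ
    exacts [hlb γ hγ, hlb' γ hγ]
  have monomial_mul (m c x) (hx : P x) : P (monomial m c * x) := fun v => by
    obtain ⟨f, hf, hlb, he⟩ := hx (v - weight ω m)
    refine ⟨monomial m c * f, I.mul_mem_left _ hf, fun γ hγ => ?_, by
      rw [weightedHomogeneousComponent_monomial_mul, he,
        ← weightedHomogeneousComponent_monomial_mul]⟩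
    obtain ⟨δ, hδ, rfl⟩ := exists_add_eq_of_mem_support_monomial_mul hγ
    simpa [map_add] using add_le_add (le_refl (weight ω m)) (hlb δ hδ)
  have mul (a x) (hx : P x) : P (a * x) := by
    induction a using MvPolynomial.induction_on' with
    | monomial m c => exact monomial_mul m c x hx
    | add p q hp hq => rw [add_mul]; exact add _ _ hp hq
  refine Submodule.span_induction ?_ zero (fun x y _ _ => add x y) (fun a x _ => mul a x) hh v
  rintro _ ⟨f, hf, hf0, rfl⟩ v
  obtain ⟨u, hlb, -, heq⟩ :=
    exists_initialForm_weightLe_eq_weightedHomogeneousComponent (ω := ω) hf0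
  rw [heq, weightedHomogeneousComponent_of_mem (weightedHomogeneousComponent_mem ω f u)]
  split_ifs with hvu
  · exact ⟨f, hf, hvu ▸ hlb, by rw [hvu]⟩
  · exact ⟨0, I.zero_mem, by simp, by simp⟩

variable {mo : MinMonomialOrder n}

theorem exists_isLeadExp_initialForm_of_mem_initialIdeal {h : MvPolynomial (Fin n) k}
    (hh : h ∈ initialIdeal (weightLe ω) I) {β : Fin n →₀ ℕ} (hβ : IsLeadExp mo h β) :
    ∃ f ∈ I, IsLeadExp mo (initialForm (weightLe ω) f) β := by
  obtain ⟨f, hf, hlb, he⟩ :=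
    exists_weightedHomogeneousComponent_eq_of_mem_initialIdeal hh (weight ω β)
  have hβ' : IsLeadExp mo (weightedHomogeneousComponent ω (weight ω β) h) β := by
    refine ⟨?_, fun δ hδ => hβ.2 δ ?_⟩
    · rw [support_weightedHomogeneousComponent, Finset.mem_filter]
      exact ⟨hβ.1, rfl⟩
    · rw [support_weightedHomogeneousComponent, Finset.mem_filter] at hδ
      exact hδ.1
  refine ⟨f, hf, ?_⟩
  rwa [initialForm_weightLe_eq_weightedHomogeneousComponent hlb (he ▸ hβ'.ne_zero), ← he]

theorem exists_isLeadExp_le_of_isLeadExp_initialForm {G : Set (MvPolynomial (Fin n) k)}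
    (hGI : G ⊆ I) (hGB : ∀ f ∈ I, ∀ α, IsLeadExp mo f α → ∃ g ∈ G, ∃ γ, IsLeadExp mo g γ ∧ γ ≤ α)
    (hGω : ∀ g ∈ G, ∀ γ, IsLeadExp mo g γ → ∀ δ ∈ g.support, weightLe ω γ δ)
    {f : MvPolynomial (Fin n) k} (hf : f ∈ I) {β : Fin n →₀ ℕ}
    (hβ : IsLeadExp mo (initialForm (weightLe ω) f) β) :
    ∃ g ∈ G, ∃ γ, IsLeadExp mo g γ ∧ γ ≤ β := by
  obtain ⟨α, hα⟩ := exists_isLeadExp mo (support_nonempty.mp ⟨β, support_initialForm_subset f hβ.1⟩)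
  induction α using mo.wellFounded.induction generalizing f with
  | _ α ih =>
    obtain ⟨g, hg, γ, hγ, hγα⟩ := hGB f hf α hα
    by_cases hmin : ∀ δ ∈ f.support, weightLe ω α δ
    · have hα' : IsLeadExp mo (initialForm (weightLe ω) f) α :=
        ⟨mem_support_initialForm.mpr ⟨hα.1, hmin⟩,
          fun δ hδ => hα.2 δ (support_initialForm_subset f hδ)⟩
      exact ⟨g, hg, γ, hγ, hβ.unique hα' ▸ hγα⟩
    push Not at hmin
    obtain ⟨δ, hδ, hδα⟩ := hmin
    -- reduce `f` by the multiple of `g` that cancels its initial term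
    have hγ0 : coeff γ g ≠ 0 := mem_support_iff.mp hγ.1
    have hc : coeff α f / coeff γ g ≠ 0 := div_ne_zero (mem_support_iff.mp hα.1) hγ0
    set q := monomial (α - γ) (coeff α f / coeff γ g) * g
    have hαγ : α - γ + γ = α := tsub_add_cancel_of_le hγα
    have hq : IsLeadExp mo q α := hαγ ▸ hγ.monomial_mul (α - γ) hc
    have hqα : coeff α q = coeff α f := by
      conv_lhs => rw [← hαγ]
      rw [coeff_monomial_mul, div_mul_cancel₀ _ hγ0]
    have hqω : ∀ ε ∈ q.support, weight ω δ < weight ω ε := by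
      intro ε hε
      obtain ⟨ε', hε', rfl⟩ := exists_add_eq_of_mem_support_monomial_mul hε
      calc weight ω δ < weight ω α := not_le.mp hδα
        _ = weight ω (α - γ) + weight ω γ := by rw [← map_add, hαγ]
        _ ≤ weight ω (α - γ) + weight ω ε' := add_le_add le_rfl
            (hGω g hg γ hγ ε' hε')
        _ = weight ω (α - γ + ε') := (map_add _ _ _).symm
    have hin : initialForm (weightLe ω) (f - q) = initialForm (weightLe ω) f :=
      initialForm_weightLe_sub_of_lt hδ hqω
    have hβ' : IsLeadExp mo (initialForm (weightLe ω) (f - q)) β := hin ▸ hβ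
    obtain ⟨α', hα'⟩ := exists_isLeadExp mo
      (support_nonempty.mp ⟨β, support_initialForm_subset _ hβ'.1⟩)
    exact ih α' (hα.lt_of_sub hq hqα.symm hα') (I.sub_mem hf (I.mul_mem_left _ (hGI hg))) hβ' hα'

end WeightInitialIdeal

namespace IsReducedGB

variable {k : Type} [Field k] {n : ℕ} {mo : MinMonomialOrder n}
  {I : Ideal (MvPolynomial (Fin n) k)} {G : Finset (MvPolynomial (Fin n) k)}

theorem ne_zero_of_mem (hG : IsReducedGB mo I G) {g : MvPolynomial (Fin n) k} (hg : g ∈ G) :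
    g ≠ 0 :=
  fun h0 => hG.2.1 (h0 ▸ hg)

theorem image_initialForm (hG : IsReducedGB mo I G) :
    (fun g => initialForm mo.le g) '' ↑G =
      (fun s => monomial s (1 : k)) '' {γ | ∃ g ∈ G, IsLeadExp mo g γ} := by
  have hmonic := hG.2.2.2.1
  ext p
  constructor
  · rintro ⟨g, hg, rfl⟩
    obtain ⟨γ, hγ⟩ := exists_isLeadExp mo (hG.ne_zero_of_mem hg)
    exact ⟨γ, ⟨g, hg, hγ⟩, by simp only [initialForm_eq_monomial hγ, hmonic g hg γ hγ]⟩
  · rintro ⟨γ, ⟨g, hg, hγ⟩, rfl⟩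
    exact ⟨g, hg, by simp only [initialForm_eq_monomial hγ, hmonic g hg γ hγ]⟩

theorem mem_initialIdeal_iff (hG : IsReducedGB mo I G) {p : MvPolynomial (Fin n) k} :
    p ∈ initialIdeal mo.le I ↔ ∀ β ∈ p.support, ∃ g ∈ G, ∃ γ, IsLeadExp mo g γ ∧ γ ≤ β := by
  rw [hG.2.2.1, hG.image_initialForm, mem_ideal_span_monomial_image]
  exact forall₂_congr fun β _ =>
    ⟨fun ⟨γ, ⟨g, hg, hγ⟩, hγβ⟩ => ⟨g, hg, γ, hγ, hγβ⟩,
      fun ⟨g, hg, γ, hγ, hγβ⟩ => ⟨γ, ⟨g, hg, hγ⟩, hγβ⟩⟩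

theorem exists_isLeadExp_le (hG : IsReducedGB mo I G) {f : MvPolynomial (Fin n) k}
    (hf : f ∈ I) {α : Fin n →₀ ℕ} (hα : IsLeadExp mo f α) :
    ∃ g ∈ G, ∃ γ, IsLeadExp mo g γ ∧ γ ≤ α :=
  hG.mem_initialIdeal_iff.mp (initialForm_mem_initialIdeal hf hα.ne_zero) α
    (mem_support_initialForm_iff_isLeadExp.mpr hα)

/-- By reducedness, the only term of `g` whose monomial lies in `in_>(I)` is its initial term. -/
theorem initialForm_initialForm_eq (hG : IsReducedGB mo I G) {g : MvPolynomial (Fin n) k}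
    (hg : g ∈ G) {le : (Fin n →₀ ℕ) → (Fin n →₀ ℕ) → Prop} (hne : initialForm le g ≠ 0)
    (hmem : initialForm mo.le (initialForm le g) ∈ initialIdeal mo.le I) :
    initialForm mo.le (initialForm le g) = initialForm mo.le g := by
  obtain ⟨β, hβ⟩ := exists_isLeadExp mo hne
  obtain ⟨g', hg', γ, hγ, hγβ⟩ :=
    hG.mem_initialIdeal_iff.mp hmem β (mem_support_initialForm_iff_isLeadExp.mpr hβ)
  have hβg : IsLeadExp mo g β := by
    by_contra h
    exact hG.2.2.2.2.2 g hg g' hg' β (support_initialForm_subset g hβ.1) h γ hγ hγβ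
  rw [initialForm_eq_monomial hβ, initialForm_eq_monomial hβg,
    coeff_initialForm_of_mem_support hβ.1]

variable {Γ : Type*} [AddCommGroup Γ] [LinearOrder Γ] [IsOrderedAddMonoid Γ] {ω : Fin n → Γ}

theorem initialIdeal_initialIdeal_weightLe_eq (hG : IsReducedGB mo I G)
    (h : ∀ g ∈ G, initialForm mo.le (initialForm (weightLe ω) g) = initialForm mo.le g) :
    initialIdeal mo.le (initialIdeal (weightLe ω) I) = initialIdeal mo.le I := by
  have hGω : ∀ g ∈ (G : Set (MvPolynomial (Fin n) k)), ∀ γ, IsLeadExp mo g γ →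
      ∀ δ ∈ g.support, weightLe ω γ δ :=
    fun g hg _ hγ => hγ.le_of_initialForm_initialForm_eq (h g hg)
  apply le_antisymm
  · refine Ideal.span_le.mpr ?_
    rintro _ ⟨p, hp, -, rfl⟩
    refine hG.mem_initialIdeal_iff.mpr fun β hβ => ?_
    obtain ⟨f, hf, hfβ⟩ := exists_isLeadExp_initialForm_of_mem_initialIdeal hp
      (mem_support_initialForm_iff_isLeadExp.mp hβ)
    exact exists_isLeadExp_le_of_isLeadExp_initialForm hG.1
      (fun f hf α hα => hG.exists_isLeadExp_le hf hα) hGω hf hfβ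
  · rw [hG.2.2.1, Ideal.span_le]
    rintro _ ⟨g, hg, rfl⟩
    have hg0 := hG.ne_zero_of_mem hg
    show initialForm mo.le g ∈ _
    rw [← h g hg]
    exact initialForm_initialForm_mem_initialIdeal_initialIdeal (hG.1 hg) hg0
      (initialForm_weightLe_ne_zero hg0)

end IsReducedGB

/-- **Membership in `C^r_>(I)` is checked on the reduced Gröbner basis** (Lemma
`Cinequalities`): `in_>(in_M(I)) = in_>(I)` iff `in_>(in_M(g)) = in_>(g)` for all `g` in the
reduced Gröbner basis `G_>(I)`. -/
theorem stmt_5 {k : Type} [Field k] {n r : ℕ}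
    (I : Ideal (MvPolynomial (Fin n) k)) (mo : MinMonomialOrder n)
    (G : Finset (MvPolynomial (Fin n) k)) (hG : IsReducedGB mo I G)
    (M : Matrix (Fin r) (Fin n) ℚ) :
    initialIdeal mo.le (initialIdeal (mLe M) I) = initialIdeal mo.le I ↔
      ∀ g ∈ G, initialForm mo.le (initialForm (mLe M) g) = initialForm mo.le g := by
  rw [mLe_eq_weightLe]
  refine ⟨fun hEq g hg => ?_, hG.initialIdeal_initialIdeal_weightLe_eq⟩
  have hg0 := hG.ne_zero_of_mem hg
  have hne := initialForm_weightLe_ne_zero (ω := fun j => toLex fun i => M i j) hg0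
  refine hG.initialForm_initialForm_eq hg hne ?_
  rw [← hEq]
  exact initialForm_initialForm_mem_initialIdeal_initialIdeal (hG.1 hg) hg0 hne
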